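/- Gyrations are norm-preserving: for u, v, w ∈ ℝ^n for which the κ-additions are defined, ‖gyr[u,v]w‖ = ‖w‖, where gyr[u,v]w = -(u ⊕_κ v) ⊕_κ (u ⊕_κ (v ⊕_κ w)). -/

import Mathlib

/-!
Write `γ x = 1 + κ‖x‖²` and `D(x, y)` for the denominator of `x ⊕ y`. Every κ-addition satisfies
`γ (x ⊕ y) · D(x, y) = γ x · γ y`; chaining this through the four κ-additions of `gyr[u,v]w`
gives `γ (gyr[u,v]w) · P = (γ u γ v)² γ w`, where `P` is the product of their denominators.
Clearing the inner denominators makes `P` a polynomial in `κ` and the Gram entries of `u, v, w`,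
and this polynomial is `(γ u γ v)²`. Hence `γ (gyr[u,v]w) = γ w`, which is the claim when
`κ ≠ 0`; for `κ = 0` the gyration is the identity.
-/

open scoped RealInnerProductSpace

noncomputable def kdenom {n : ℕ} (κ : ℝ) (x y : EuclideanSpace ℝ (Fin n)) : ℝ :=
  1 - 2 * κ * ⟪x, y⟫ + κ ^ 2 * ‖x‖ ^ 2 * ‖y‖ ^ 2

noncomputable def kadd {n : ℕ} (κ : ℝ) (x y : EuclideanSpace ℝ (Fin n)) :
    EuclideanSpace ℝ (Fin n) :=
  (kdenom κ x y)⁻¹ •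
    ((1 - 2 * κ * ⟪x, y⟫ - κ * ‖y‖ ^ 2) • x + (1 + κ * ‖x‖ ^ 2) • y)

/-- The gyration operator. -/
noncomputable def kgyr {n : ℕ} (κ : ℝ) (u v w : EuclideanSpace ℝ (Fin n)) :
    EuclideanSpace ℝ (Fin n) :=
  kadd κ (-(kadd κ u v)) (kadd κ u (kadd κ v w))

section KappaAddition

variable {n : ℕ} (κ : ℝ)

lemma inner_kadd_mul_kdenom (x y z : EuclideanSpace ℝ (Fin n)) (h : kdenom κ x y ≠ 0) :
    ⟪z, kadd κ x y⟫ * kdenom κ x y =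
      (1 - 2 * κ * ⟪x, y⟫ - κ * ‖y‖ ^ 2) * ⟪z, x⟫ + (1 + κ * ‖x‖ ^ 2) * ⟪z, y⟫ := by
  simp only [kadd, real_inner_smul_right, inner_add_right]
  field_simp

lemma norm_kadd_sq_mul_kdenom (x y : EuclideanSpace ℝ (Fin n)) (h : kdenom κ x y ≠ 0) :
    ‖kadd κ x y‖ ^ 2 * kdenom κ x y = ‖x‖ ^ 2 + 2 * ⟪x, y⟫ + ‖y‖ ^ 2 := by
  rw [kadd, norm_smul, mul_pow, norm_add_sq_real, norm_smul, norm_smul, real_inner_smul_left,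
    real_inner_smul_right, Real.norm_eq_abs, Real.norm_eq_abs, Real.norm_eq_abs, mul_pow,
    mul_pow, sq_abs, sq_abs, sq_abs, inv_pow]
  field_simp
  rw [kdenom]
  ring

lemma one_add_norm_kadd_sq_mul_kdenom (x y : EuclideanSpace ℝ (Fin n)) (h : kdenom κ x y ≠ 0) :
    (1 + κ * ‖kadd κ x y‖ ^ 2) * kdenom κ x y = (1 + κ * ‖x‖ ^ 2) * (1 + κ * ‖y‖ ^ 2) := by
  linear_combination κ * norm_kadd_sq_mul_kdenom κ x y h + kdenom.eq_1 κ x y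

lemma kdenom_kadd_mul_kdenom (x y z : EuclideanSpace ℝ (Fin n)) (h : kdenom κ y z ≠ 0) :
    kdenom κ x (kadd κ y z) * kdenom κ y z =
      kdenom κ y z
        - 2 * κ * ((1 - 2 * κ * ⟪y, z⟫ - κ * ‖z‖ ^ 2) * ⟪x, y⟫ + (1 + κ * ‖y‖ ^ 2) * ⟪x, z⟫)
        + κ ^ 2 * ‖x‖ ^ 2 * (‖y‖ ^ 2 + 2 * ⟪y, z⟫ + ‖z‖ ^ 2) := by
  rw [kdenom]
  linear_combination -2 * κ * inner_kadd_mul_kdenom κ y z x h +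
    κ ^ 2 * ‖x‖ ^ 2 * norm_kadd_sq_mul_kdenom κ y z h

lemma inner_kadd_kadd_mul_kdenom (x y z t : EuclideanSpace ℝ (Fin n))
    (h : kdenom κ y z ≠ 0) (h' : kdenom κ x (kadd κ y z) ≠ 0) :
    ⟪t, kadd κ x (kadd κ y z)⟫ * (kdenom κ x (kadd κ y z) * kdenom κ y z) =
      (kdenom κ y z
          - 2 * κ * ((1 - 2 * κ * ⟪y, z⟫ - κ * ‖z‖ ^ 2) * ⟪x, y⟫ + (1 + κ * ‖y‖ ^ 2) * ⟪x, z⟫)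
          - κ * (‖y‖ ^ 2 + 2 * ⟪y, z⟫ + ‖z‖ ^ 2)) * ⟪t, x⟫
        + (1 + κ * ‖x‖ ^ 2) *
          ((1 - 2 * κ * ⟪y, z⟫ - κ * ‖z‖ ^ 2) * ⟪t, y⟫ + (1 + κ * ‖y‖ ^ 2) * ⟪t, z⟫) := by
  linear_combination kdenom κ y z * inner_kadd_mul_kdenom κ x (kadd κ y z) t h' +
    (1 + κ * ‖x‖ ^ 2) * inner_kadd_mul_kdenom κ y z t h -
    2 * κ * ⟪t, x⟫ * inner_kadd_mul_kdenom κ y z x h -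
    κ * ⟪t, x⟫ * norm_kadd_sq_mul_kdenom κ y z h

lemma norm_kadd_kadd_sq_mul_kdenom (x y z : EuclideanSpace ℝ (Fin n))
    (h : kdenom κ y z ≠ 0) (h' : kdenom κ x (kadd κ y z) ≠ 0) :
    ‖kadd κ x (kadd κ y z)‖ ^ 2 * (kdenom κ x (kadd κ y z) * kdenom κ y z) =
      ‖x‖ ^ 2 * kdenom κ y z
        + 2 * ((1 - 2 * κ * ⟪y, z⟫ - κ * ‖z‖ ^ 2) * ⟪x, y⟫ + (1 + κ * ‖y‖ ^ 2) * ⟪x, z⟫)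
        + (‖y‖ ^ 2 + 2 * ⟪y, z⟫ + ‖z‖ ^ 2) := by
  linear_combination kdenom κ y z * norm_kadd_sq_mul_kdenom κ x (kadd κ y z) h' +
    2 * inner_kadd_mul_kdenom κ y z x h + norm_kadd_sq_mul_kdenom κ y z h

lemma kdenom_kgyr_mul (u v w : EuclideanSpace ℝ (Fin n)) (h₁ : kdenom κ u v ≠ 0)
    (h₂ : kdenom κ v w ≠ 0) (h₃ : kdenom κ u (kadd κ v w) ≠ 0) :
    kdenom κ (-(kadd κ u v)) (kadd κ u (kadd κ v w)) *
        (kdenom κ u v * kdenom κ u (kadd κ v w) * kdenom κ v w) =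
      ((1 + κ * ‖u‖ ^ 2) * (1 + κ * ‖v‖ ^ 2)) ^ 2 := by
  have hD₄ : kdenom κ (-(kadd κ u v)) (kadd κ u (kadd κ v w)) =
      1 + 2 * κ * ⟪kadd κ u (kadd κ v w), kadd κ u v⟫
        + κ ^ 2 * ‖kadd κ u v‖ ^ 2 * ‖kadd κ u (kadd κ v w)‖ ^ 2 := by
    rw [kdenom, inner_neg_left, norm_neg, real_inner_comm]
    ring
  rw [hD₄]
  linear_combination (norm := skip)
    kdenom κ u v * kdenom_kadd_mul_kdenom κ u v w h₂ +
    2 * κ * kdenom κ u (kadd κ v w) * kdenom κ v w *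
      inner_kadd_mul_kdenom κ u v (kadd κ u (kadd κ v w)) h₁ +
    2 * κ * (1 - 2 * κ * ⟪u, v⟫ - κ * ‖v‖ ^ 2) * inner_kadd_kadd_mul_kdenom κ u v w u h₂ h₃ +
    2 * κ * (1 + κ * ‖u‖ ^ 2) * inner_kadd_kadd_mul_kdenom κ u v w v h₂ h₃ +
    κ ^ 2 * ‖kadd κ u (kadd κ v w)‖ ^ 2 * kdenom κ u (kadd κ v w) * kdenom κ v w *
      norm_kadd_sq_mul_kdenom κ u v h₁ +
    κ ^ 2 * (‖u‖ ^ 2 + 2 * ⟪u, v⟫ + ‖v‖ ^ 2) * norm_kadd_kadd_sq_mul_kdenom κ u v w h₂ h₃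
  rw [kdenom.eq_1 κ u v, kdenom.eq_1 κ v w]
  simp only [real_inner_self_eq_norm_sq, real_inner_comm]
  ring

lemma one_add_norm_kgyr_sq_mul (u v w : EuclideanSpace ℝ (Fin n)) (h₁ : kdenom κ u v ≠ 0)
    (h₂ : kdenom κ v w ≠ 0) (h₃ : kdenom κ u (kadd κ v w) ≠ 0)
    (h₄ : kdenom κ (-(kadd κ u v)) (kadd κ u (kadd κ v w)) ≠ 0) :
    (1 + κ * ‖kgyr κ u v w‖ ^ 2) * (kdenom κ (-(kadd κ u v)) (kadd κ u (kadd κ v w)) *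
        (kdenom κ u v * kdenom κ u (kadd κ v w) * kdenom κ v w)) =
      ((1 + κ * ‖u‖ ^ 2) * (1 + κ * ‖v‖ ^ 2)) ^ 2 * (1 + κ * ‖w‖ ^ 2) := by
  have h₄' := one_add_norm_kadd_sq_mul_kdenom κ _ _ h₄
  rw [norm_neg] at h₄'
  rw [kgyr]
  linear_combination
    kdenom κ u v * kdenom κ u (kadd κ v w) * kdenom κ v w * h₄' +
    (1 + κ * ‖kadd κ u (kadd κ v w)‖ ^ 2) * kdenom κ u (kadd κ v w) * kdenom κ v w *
      one_add_norm_kadd_sq_mul_kdenom κ u v h₁ +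
    (1 + κ * ‖u‖ ^ 2) * (1 + κ * ‖v‖ ^ 2) * kdenom κ v w *
      one_add_norm_kadd_sq_mul_kdenom κ u (kadd κ v w) h₃ +
    (1 + κ * ‖u‖ ^ 2) ^ 2 * (1 + κ * ‖v‖ ^ 2) * one_add_norm_kadd_sq_mul_kdenom κ v w h₂

lemma kadd_curvature_zero (x y : EuclideanSpace ℝ (Fin n)) : kadd 0 x y = x + y := by
  simp [kadd, kdenom]

lemma kgyr_curvature_zero (u v w : EuclideanSpace ℝ (Fin n)) : kgyr 0 u v w = w := by
  simp only [kgyr, kadd_curvature_zero]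
  abel

end KappaAddition

/-- Gyrations preserve the norm. -/
theorem kgyr_norm {n : ℕ} (κ : ℝ) (u v w : EuclideanSpace ℝ (Fin n))
    (h₁ : kdenom κ u v ≠ 0) (h₂ : kdenom κ v w ≠ 0)
    (h₃ : kdenom κ u (kadd κ v w) ≠ 0)
    (h₄ : kdenom κ (-(kadd κ u v)) (kadd κ u (kadd κ v w)) ≠ 0) :
    ‖kgyr κ u v w‖ = ‖w‖ := by
  rcases eq_or_ne κ 0 with rfl | hκ
  · rw [kgyr_curvature_zero]
  have hD := kdenom_kgyr_mul κ u v w h₁ h₂ h₃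
  have hD_ne : ((1 + κ * ‖u‖ ^ 2) * (1 + κ * ‖v‖ ^ 2)) ^ 2 ≠ 0 := by
    rw [← hD]
    exact mul_ne_zero h₄ (mul_ne_zero (mul_ne_zero h₁ h₃) h₂)
  have hγ : 1 + κ * ‖kgyr κ u v w‖ ^ 2 = 1 + κ * ‖w‖ ^ 2 := by
    have := one_add_norm_kgyr_sq_mul κ u v w h₁ h₂ h₃ h₄
    rw [hD, mul_comm] at this
    exact mul_left_cancel₀ hD_ne this
  have hsq : ‖kgyr κ u v w‖ ^ 2 = ‖w‖ ^ 2 := mul_left_cancel₀ hκ (add_left_cancel hγ)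
  exact (sq_eq_sq₀ (norm_nonneg _) (norm_nonneg _)).mp hsq
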